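/- arXiv:1412.2275 — 3 statements merged into one kernel-verified Lean document; each statement's English description precedes it below -/
import Mathlib

section
/- Let G be a graph containing a path P = v_0 v_1 ⋯ v_l with deg(v_0) = 1. Let v = v_r and u = v_s with 0 ≤ r < s, r + s ≤ l − 1, and deg(v_i) = 2 for every i with 0 < i < (r+s)/2. Then |SW_k(G;v,v)| ≤ |SW_k(G;u,u)| for all k ≥ 0, with strict inequality for some k. -/
open scoped BigOperators

universe u

/-- The signless Laplacian matrix `Q = D + A` of a graph. -/
noncomputable def signLap {V : Type u} [Fintype V] (G : SimpleGraph V) :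
    Matrix V V ℝ :=
  letI := Classical.decEq V
  letI : DecidableRel G.Adj := Classical.decRel _
  Matrix.diagonal (fun i => (G.degree i : ℝ)) + G.adjMatrix ℝ

lemma signLap_isHermitian {V : Type u} [Fintype V] (G : SimpleGraph V) :
    (signLap G).IsHermitian := by
  classical
  unfold signLap
  ext i j
  simp [Matrix.conjTranspose_apply, Matrix.add_apply, Matrix.diagonal_apply,
    SimpleGraph.adjMatrix_apply, SimpleGraph.adj_comm]
  split_ifs with h h' h' <;> simp_all [SimpleGraph.adj_comm, eq_comm] <;> subst h' <;> rfl

/-- Eigenvalues of the signless Laplacian. -/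
noncomputable def signLapEig {V : Type u} [Fintype V] (G : SimpleGraph V) : V → ℝ :=
  letI := Classical.decEq V
  (signLap_isHermitian G).eigenvalues

/-- The signless Laplacian Estrada index. -/
noncomputable def SLEE {V : Type u} [Fintype V] (G : SimpleGraph V) : ℝ :=
  ∑ i, Real.exp (signLapEig G i)

/-- The `k`-th signless Laplacian spectral moment. -/
noncomputable def specMoment {V : Type u} [Fintype V] (G : SimpleGraph V) (k : ℕ) : ℝ :=
  ∑ i, (signLapEig G i) ^ k

/-- The number of semi-edge walks of length `k` in `G` from `x` to `y`. -/
noncomputable def swCount {V : Type u} (G : SimpleGraph V) (k : ℕ) (x y : V) : ℕ :=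
  Nat.card { p : (Fin (k + 1) → V) × (Fin k → Sym2 V) //
    (∀ i : Fin k, p.2 i ∈ G.edgeSet ∧ p.1 i.castSucc ∈ p.2 i ∧ p.1 i.succ ∈ p.2 i) ∧
    p.1 0 = x ∧ p.1 (Fin.last k) = y }

/-- A unicyclic graph: connected with as many edges as vertices. -/
def IsUnicyclic {V : Type u} [Fintype V] (G : SimpleGraph V) : Prop :=
  G.Connected ∧ Nat.card G.edgeSet = Fintype.card V

/-- The cycle graph on `Fin q`. -/
def cycleGraph' (q : ℕ) : SimpleGraph (Fin q) :=
  SimpleGraph.fromRel (fun i j => (i.val + 1) % q = j.val)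

/-- `C_q S(n₁,…,n_q)` : the cycle `C_q` with `n i` pendent vertices attached to vertex `i`. -/
def CqS (q : ℕ) (n : Fin q → ℕ) : SimpleGraph (Fin q ⊕ Σ i : Fin q, Fin (n i)) :=
  SimpleGraph.fromRel (fun x y =>
    (∃ i j : Fin q, x = Sum.inl i ∧ y = Sum.inl j ∧ (i.val + 1) % q = j.val) ∨
    (∃ (i : Fin q) (p : Fin (n i)), x = Sum.inl i ∧ y = Sum.inr ⟨i, p⟩))

/-- `C_q P(n₁,…,n_q)` : the cycle `C_q` with a pendent path on `n i + 1` vertices at vertex `i`. -/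
def CqP (q : ℕ) (n : Fin q → ℕ) : SimpleGraph (Fin q ⊕ Σ i : Fin q, Fin (n i)) :=
  SimpleGraph.fromRel (fun x y =>
    (∃ i j : Fin q, x = Sum.inl i ∧ y = Sum.inl j ∧ (i.val + 1) % q = j.val) ∨
    (∃ (i : Fin q) (h : 0 < n i), x = Sum.inl i ∧ y = Sum.inr ⟨i, ⟨0, h⟩⟩) ∨
    (∃ (i : Fin q) (a b : Fin (n i)), x = Sum.inr ⟨i, a⟩ ∧ y = Sum.inr ⟨i, b⟩ ∧
      a.val + 1 = b.val))

/-- `G⁽¹⁾ = C₃S(n-3,0,0)`. -/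
noncomputable def Gmax1 (m : ℕ) := CqS 3 ![m, 0, 0]

/-- `G₍₂₎`: the cycle `C_{n-1}` with one pendent vertex attached. -/
noncomputable def Gmin2 (n : ℕ) := CqP (n - 1) (fun i => if i.val = 0 then 1 else 0)

/-!
A semi-edge walk `x₀ e₁ x₁ … e_k x_k` is the same thing as a walk of length `2k` in the subdivision
`S(G)` of `G`. In `S(G)` the path `v₀ e₀ v₁ e₁ …` starts at the leaf `v₀`, and its first `r + s`
vertices have no neighbours off it. Reflecting its first `2(r + s) + 1` vertices about the middle
one exchanges `v_r` and `v_s` and maps edges at vertices of the first half to edges, so by induction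
on the length, walks between vertices of the first half (or the middle vertex) are dominated by
walks between their reflections. Strictness starts with the closed walks of length 2 at `v₀`: the
reflection of `v₀` has a second neighbour, just beyond the reflected segment. It then propagates
along the path to the closed walks of length `2(2r + 1)` at `v_r`.
-/

open Finset Matrix

namespace Matrix

variable {I : Type*}

structure PermDominatedOn (M : Matrix I I ℕ) (σ : Equiv.Perm I) (L : Set I) : Prop where
  le_apply_perm : ∀ z ∈ L, ∀ y, M z y ≤ M (σ z) (σ y)
  mem_or_fixed : ∀ z ∈ L, ∀ y, M z y ≠ 0 → y ∈ L ∨ σ y = y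

lemma mul_apply_perm [Fintype I] (σ : Equiv.Perm I) (M N : Matrix I I ℕ) (z u : I) :
    (M * N) (σ z) (σ u) = ∑ y, M (σ z) (σ y) * N (σ y) (σ u) := by
  rw [mul_apply, ← Equiv.sum_comp σ]

namespace PermDominatedOn

variable {M N : Matrix I I ℕ} {σ : Equiv.Perm I} {L : Set I} {z u : I}

lemma mul_le_mul_apply_perm (hD : M.PermDominatedOn σ L) (hz : z ∈ L)
    (hN : ∀ y, y ∈ L ∨ σ y = y → N y u ≤ N (σ y) (σ u)) (y : I) :
    M z y * N y u ≤ M (σ z) (σ y) * N (σ y) (σ u) := by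
  by_cases hzy : M z y = 0
  · simp [hzy]
  · exact Nat.mul_le_mul (hD.le_apply_perm z hz y) (hN y (hD.mem_or_fixed z hz y hzy))

variable [Fintype I] [DecidableEq I]

theorem pow_apply_le (hM : M.IsSymm) (hD : M.PermDominatedOn σ L) (k : ℕ)
    (hz : z ∈ L ∨ σ z = z) (hu : u ∈ L ∨ σ u = u) :
    (M ^ k) z u ≤ (M ^ k) (σ z) (σ u) := by
  induction k generalizing z u with
  | zero => simp [one_apply, σ.injective.eq_iff]
  | succ k ih =>
    have row : ∀ {z u}, z ∈ L → (u ∈ L ∨ σ u = u) →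
        (M ^ (k + 1)) z u ≤ (M ^ (k + 1)) (σ z) (σ u) := fun hz hu => by
      rw [pow_succ', mul_apply, mul_apply_perm]
      exact sum_le_sum fun y _ =>
        hD.mul_le_mul_apply_perm hz (N := M ^ k) (fun _ hy => ih hy hu) y
    rcases hz with hz | hz
    · exact row hz hu
    rcases hu with hu | hu
    · -- both sides are symmetric, so the row argument applies to the column `u ∈ L`
      have hMk := hM.pow (k + 1)
      rw [hMk.apply u z, hMk.apply (σ u) (σ z)]
      exact row hu (.inr hz)
    · rw [hz, hu]

theorem pow_succ_apply_lt (hM : M.IsSymm) (hD : M.PermDominatedOn σ L) {k : ℕ}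
    (hz : z ∈ L) (hu : u ∈ L ∨ σ u = u) {y : I}
    (hy : M z y * (M ^ k) y u < M (σ z) (σ y) * (M ^ k) (σ y) (σ u)) :
    (M ^ (k + 1)) z u < (M ^ (k + 1)) (σ z) (σ u) := by
  rw [pow_succ', mul_apply, mul_apply_perm]
  refine sum_lt_sum (fun y _ => ?_) ⟨y, mem_univ y, hy⟩
  exact hD.mul_le_mul_apply_perm hz (N := M ^ k) (fun _ hy => hD.pow_apply_le hM k hy hu) y

end PermDominatedOn

end Matrix

section Reflection

variable {I : Type*} (q : ℕ → I) (n : ℕ)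

open Classical in
/-- Reverses `q 0, …, q n` (when these are distinct) and fixes every other point. -/
noncomputable def seqReflection (z : I) : I :=
  if h : ∃ j ≤ n, q j = z then q (n - h.choose) else z

variable {q n}

lemma seqReflection_apply (hq : Set.InjOn q (Set.Iic n)) {j : ℕ} (hj : j ≤ n) :
    seqReflection q n (q j) = q (n - j) := by
  have h : ∃ i ≤ n, q i = q j := ⟨j, hj, rfl⟩
  rw [seqReflection, dif_pos h, hq h.choose_spec.1 hj h.choose_spec.2]

lemma seqReflection_of_forall_ne {z : I} (hz : ∀ j ≤ n, q j ≠ z) :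
    seqReflection q n z = z := by
  rw [seqReflection, dif_neg (by simpa using hz)]

lemma seqReflection_involutive (hq : Set.InjOn q (Set.Iic n)) :
    Function.Involutive (seqReflection q n) := by
  intro z
  by_cases hz : ∃ j ≤ n, q j = z
  · obtain ⟨j, hj, rfl⟩ := hz
    rw [seqReflection_apply hq hj, seqReflection_apply hq (Nat.sub_le n j), Nat.sub_sub_self hj]
  · push Not at hz
    rw [seqReflection_of_forall_ne hz, seqReflection_of_forall_ne hz]

end Reflection

namespace SimpleGraph

variable {I : Type*} (H : SimpleGraph I) (q : ℕ → I) (c : ℕ)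

/-- The first `c` vertices of the path `q 0, …, q (2 * c + 1)` have no neighbours off the path:
`q 0` is a leaf and `q 1, …, q (c - 1)` have degree two. -/
structure IsPendantPath : Prop where
  injOn : Set.InjOn q (Set.Iic (2 * c + 1))
  adj : ∀ j ≤ 2 * c, H.Adj (q j) (q (j + 1))
  eq_or_eq_of_adj : ∀ j < c, ∀ y, H.Adj (q j) y → y = q (j - 1) ∨ y = q (j + 1)

namespace IsPendantPath

variable {H q c}

lemma injOn_Iic_two_mul (hP : H.IsPendantPath q c) : Set.InjOn q (Set.Iic (2 * c)) :=
  hP.injOn.mono (Set.Iic_subset_Iic.mpr (Nat.le_succ _))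

noncomputable def reflection (hP : H.IsPendantPath q c) : Equiv.Perm I :=
  (seqReflection_involutive hP.injOn_Iic_two_mul).toPerm

lemma reflection_apply (hP : H.IsPendantPath q c) {j : ℕ} (hj : j ≤ 2 * c) :
    hP.reflection (q j) = q (2 * c - j) :=
  seqReflection_apply hP.injOn_Iic_two_mul hj

lemma reflection_apply_two_mul_add_one (hP : H.IsPendantPath q c) :
    hP.reflection (q (2 * c + 1)) = q (2 * c + 1) :=
  seqReflection_of_forall_ne fun _ hj h => by
    have := hP.injOn (by simp; omega) (by simp) h
    omega

lemma mem_or_reflection_eq (hP : H.IsPendantPath q c) {j : ℕ} (hj : j ≤ c) :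
    q j ∈ {z | ∃ j < c, q j = z} ∨ hP.reflection (q j) = q j := by
  obtain hj | rfl := Nat.lt_or_eq_of_le hj
  · exact .inl ⟨j, hj, rfl⟩
  · exact .inr (by rw [hP.reflection_apply (by omega)]; congr 1; omega)

lemma adj_reflection (hP : H.IsPendantPath q c) {j : ℕ} (hj : j < c) {y : I}
    (hy : H.Adj (q j) y) : H.Adj (hP.reflection (q j)) (hP.reflection y) := by
  rw [hP.reflection_apply (by omega)]
  rcases hP.eq_or_eq_of_adj j hj y hy with rfl | rfl
  · obtain rfl | hj0 := Nat.eq_zero_or_pos j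
    · exact absurd hy H.irrefl
    rw [hP.reflection_apply (by omega)]
    convert hP.adj (2 * c - j) (by omega) using 2
    omega
  · rw [hP.reflection_apply (by omega)]
    convert (hP.adj (2 * c - (j + 1)) (by omega)).symm using 2
    omega

lemma permDominatedOn [DecidableRel H.Adj] (hP : H.IsPendantPath q c) :
    (H.adjMatrix ℕ).PermDominatedOn hP.reflection {z | ∃ j < c, q j = z} where
  le_apply_perm := by
    rintro _ ⟨j, hj, rfl⟩ y
    by_cases hy : H.Adj (q j) y
    · simp [adjMatrix_apply, hy, hP.adj_reflection hj hy]
    · simp [hy]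
  mem_or_fixed := by
    rintro _ ⟨j, hj, rfl⟩ y hy
    rw [adjMatrix_apply, ite_ne_right_iff] at hy
    rcases hP.eq_or_eq_of_adj j hj y hy.1 with rfl | rfl <;>
      exact hP.mem_or_reflection_eq (by omega)

variable [Fintype I] [DecidableEq I] [DecidableRel H.Adj]

theorem adjMatrix_pow_apply_le (hP : H.IsPendantPath q c) {i j : ℕ} (hi : i ≤ c) (hj : j ≤ c)
    (k : ℕ) :
    (H.adjMatrix ℕ ^ k) (q i) (q j) ≤ (H.adjMatrix ℕ ^ k) (q (2 * c - i)) (q (2 * c - j)) := by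
  rw [← hP.reflection_apply (by omega), ← hP.reflection_apply (by omega)]
  exact hP.permDominatedOn.pow_apply_le (isSymm_adjMatrix H) k
    (hP.mem_or_reflection_eq hi) (hP.mem_or_reflection_eq hj)

lemma adjMatrix_sq_apply_lt (hP : H.IsPendantPath q c) (hc : 0 < c) :
    (H.adjMatrix ℕ ^ 2) (q 0) (q 0) < (H.adjMatrix ℕ ^ 2) (q (2 * c)) (q (2 * c)) := by
  have hσ0 : hP.reflection (q 0) = q (2 * c) := hP.reflection_apply (Nat.zero_le _)
  rw [← hσ0]
  refine hP.permDominatedOn.pow_succ_apply_lt (isSymm_adjMatrix H) ⟨0, hc, rfl⟩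
    (hP.mem_or_reflection_eq (Nat.zero_le c)) (y := q (2 * c + 1)) ?_
  have hfar : ¬H.Adj (q 0) (q (2 * c + 1)) := fun h => by
    rcases hP.eq_or_eq_of_adj 0 hc _ h with h | h <;>
      have := hP.injOn (by simp only [Set.mem_Iic]; omega) (by simp only [Set.mem_Iic]; omega) h <;>
      omega
  rw [pow_one, hσ0, hP.reflection_apply_two_mul_add_one]
  simp [adjMatrix_apply, hfar, hP.adj _ le_rfl, (hP.adj _ le_rfl).symm]

lemma adjMatrix_pow_add_apply_lt (hP : H.IsPendantPath q c) {i k : ℕ} (hi : i ≤ c)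
    (h0 : (H.adjMatrix ℕ ^ k) (q 0) (q i) < (H.adjMatrix ℕ ^ k) (q (2 * c)) (q (2 * c - i)))
    {j : ℕ} (hj : j < c) :
    (H.adjMatrix ℕ ^ (k + j)) (q j) (q i) <
      (H.adjMatrix ℕ ^ (k + j)) (q (2 * c - j)) (q (2 * c - i)) := by
  induction j with
  | zero => simpa using h0
  | succ j ih =>
    have ih := ih (by omega)
    rw [← hP.reflection_apply (by omega), ← hP.reflection_apply (by omega)] at ih ⊢
    refine hP.permDominatedOn.pow_succ_apply_lt (isSymm_adjMatrix H) ⟨j + 1, hj, rfl⟩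
      (hP.mem_or_reflection_eq hi) (y := q j) ?_
    have hadj := (hP.adj j (by omega)).symm
    rw [adjMatrix_apply, if_pos hadj, adjMatrix_apply, if_pos (hP.adj_reflection hj hadj)]
    simpa using ih

theorem adjMatrix_pow_apply_lt (hP : H.IsPendantPath q c) {i : ℕ} (hi : i < c) :
    (H.adjMatrix ℕ ^ (2 * i + 2)) (q i) (q i) <
      (H.adjMatrix ℕ ^ (2 * i + 2)) (q (2 * c - i)) (q (2 * c - i)) := by
  have h0 : (H.adjMatrix ℕ ^ 2) (q 0) (q 0) < (H.adjMatrix ℕ ^ 2) (q (2 * c)) (q (2 * c - 0)) :=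
    hP.adjMatrix_sq_apply_lt (by omega)
  have h1 := hP.adjMatrix_pow_add_apply_lt (Nat.zero_le c) h0 hi
  have hsymm := (isSymm_adjMatrix (α := ℕ) H).pow (2 + i)
  rw [Nat.sub_zero, hsymm.apply (q 0), hsymm.apply (q (2 * c))] at h1
  rw [show 2 * i + 2 = 2 + i + i by ring]
  exact hP.adjMatrix_pow_add_apply_lt hi.le h1 hi

end IsPendantPath

variable {V : Type*} (G : SimpleGraph V)

lemma eq_or_eq_of_adj_of_degree_eq_two {v a b w : V} [Fintype (G.neighborSet v)]
    (hv : G.degree v = 2) (ha : G.Adj v a) (hb : G.Adj v b) (hab : a ≠ b) (hw : G.Adj v w) :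
    w = a ∨ w = b := by
  classical
  obtain ⟨a', b', -, hN⟩ := Finset.card_eq_two.mp hv
  have hmem : ∀ u, G.Adj v u → u = a' ∨ u = b' := fun u hu => by
    simpa [hN] using (G.mem_neighborFinset v u).mpr hu
  rcases hmem a ha with rfl | rfl <;> rcases hmem b hb with rfl | rfl <;>
    rcases hmem w hw with rfl | rfl <;> simp_all

variable {G}

lemma Walk.eq_getVert_one_of_adj {x y w : V} (p : G.Walk x y) (hp : 0 < p.length)
    [Fintype (G.neighborSet x)] (hx : G.degree x = 1) (hw : G.Adj x w) : w = p.getVert 1 :=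
  (degree_eq_one_iff_existsUnique_adj.mp hx).unique hw (by simpa using p.adj_getVert_succ hp)

lemma Walk.IsPath.eq_or_eq_of_adj_getVert {x y w : V} {p : G.Walk x y} (hp : p.IsPath) {i : ℕ}
    (hi0 : 0 < i) (hi : i < p.length) [Fintype (G.neighborSet (p.getVert i))]
    (hdeg : G.degree (p.getVert i) = 2) (hw : G.Adj (p.getVert i) w) :
    w = p.getVert (i - 1) ∨ w = p.getVert (i + 1) := by
  refine G.eq_or_eq_of_adj_of_degree_eq_two hdeg ?_ (p.adj_getVert_succ hi) (fun h => ?_) hw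
  · simpa [Nat.sub_add_cancel hi0] using (p.adj_getVert_succ (i := i - 1) (by omega)).symm
  · have := hp.getVert_injOn (by simp; omega) (by simp; omega) h
    omega

variable (G)

abbrev SemiEdgeWalk (k : ℕ) (x y : V) : Type _ :=
  { p : (Fin (k + 1) → V) × (Fin k → Sym2 V) //
    (∀ i : Fin k, p.2 i ∈ G.edgeSet ∧ p.1 i.castSucc ∈ p.2 i ∧ p.1 i.succ ∈ p.2 i) ∧
    p.1 0 = x ∧ p.1 (Fin.last k) = y }

lemma swCount_zero [DecidableEq V] (x y : V) : swCount G 0 x y = if x = y then 1 else 0 := by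
  split_ifs with hxy
  · subst hxy
    refine Nat.card_eq_one_iff_exists.mpr ⟨⟨(fun _ => x, finZeroElim), finZeroElim, rfl, rfl⟩, ?_⟩
    rintro ⟨⟨f, g⟩, -, hf, -⟩
    congr
    · funext i
      rwa [Fin.fin_one_eq_zero i]
    · exact Subsingleton.elim _ _
  · exact Nat.card_eq_zero.mpr (.inl ⟨fun w => hxy (w.2.2.1.symm.trans w.2.2.2)⟩)

def SemiEdgeWalk.consEquiv (k : ℕ) (x y z : V) :
    {w : G.SemiEdgeWalk (k + 1) x y // w.1.1 1 = z} ≃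
      {e : Sym2 V // e ∈ G.edgeSet ∧ x ∈ e ∧ z ∈ e} × G.SemiEdgeWalk k z y where
  toFun
    | ⟨⟨⟨f, g⟩, hstep, hf, hl⟩, hz⟩ =>
      (⟨g 0, by dsimp only at hstep hf hz; simpa [hf, hz] using hstep 0⟩,
       ⟨(Fin.tail f, Fin.tail g), fun i => by simpa [Fin.tail] using hstep i.succ,
        by dsimp only at hz; simpa [Fin.tail] using hz, by simpa [Fin.tail] using hl⟩)
  invFun
    | (⟨e, he⟩, ⟨⟨f, g⟩, hstep, hf, hl⟩) =>
      ⟨⟨(Fin.cons x f, Fin.cons e g), fun i => by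
          refine Fin.cases ?_ (fun j => ?_) i
          · dsimp only at hf; simpa [hf] using he
          · simpa [← Fin.succ_castSucc] using hstep j,
        rfl, by simpa [← Fin.succ_last] using hl⟩,
       by simpa using hf⟩
  left_inv := by
    rintro ⟨⟨⟨f, g⟩, -, rfl, -⟩, -⟩
    simp [Fin.cons_self_tail]
  right_inv := by
    rintro ⟨⟨e, he⟩, ⟨⟨f, g⟩, -, -, -⟩⟩
    simp

lemma swCount_succ [Fintype V] (k : ℕ) (x y : V) :
    swCount G (k + 1) x y =
      ∑ z, Nat.card {e : Sym2 V // e ∈ G.edgeSet ∧ x ∈ e ∧ z ∈ e} * swCount G k z y := by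
  rw [swCount, Nat.card_congr
      (Equiv.sigmaFiberEquiv fun w : G.SemiEdgeWalk (k + 1) x y => w.1.1 1).symm, Nat.card_sigma]
  refine sum_congr rfl fun z _ => ?_
  rw [Nat.card_congr (SemiEdgeWalk.consEquiv G k x y z), Nat.card_prod]
  rfl

def subdivision : SimpleGraph (V ⊕ Sym2 V) where
  Adj
    | .inl v, .inr e | .inr e, .inl v => e ∈ G.edgeSet ∧ v ∈ e
    | _, _ => False
  symm := ⟨by rintro (_ | _) (_ | _) h <;> exact h⟩
  loopless := ⟨by rintro (_ | _) h <;> exact h⟩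

@[simp] lemma subdivision_adj_inl_inr {v : V} {e : Sym2 V} :
    G.subdivision.Adj (.inl v) (.inr e) ↔ e ∈ G.edgeSet ∧ v ∈ e := Iff.rfl

@[simp] lemma subdivision_adj_inr_inl {v : V} {e : Sym2 V} :
    G.subdivision.Adj (.inr e) (.inl v) ↔ e ∈ G.edgeSet ∧ v ∈ e := Iff.rfl

@[simp] lemma not_subdivision_adj_inl_inl {v w : V} : ¬G.subdivision.Adj (.inl v) (.inl w) := id

@[simp] lemma not_subdivision_adj_inr_inr {e f : Sym2 V} : ¬G.subdivision.Adj (.inr e) (.inr f) :=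
  id

lemma adjMatrix_subdivision [DecidableEq V] [DecidableRel G.Adj]
    [DecidableRel G.subdivision.Adj] :
    G.subdivision.adjMatrix ℕ = fromBlocks 0 (G.incMatrix ℕ) (G.incMatrix ℕ)ᵀ 0 := by
  ext (v | e) (w | f) <;> simp [adjMatrix_apply, incMatrix_apply', incidenceSet] <;> congr

section

variable [Fintype V] [DecidableEq V] [DecidableRel G.Adj]

lemma incMatrix_mul_transpose_apply_eq_card (x z : V) :
    (G.incMatrix ℕ * (G.incMatrix ℕ)ᵀ) x z =
      Nat.card {e : Sym2 V // e ∈ G.edgeSet ∧ x ∈ e ∧ z ∈ e} := by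
  simp_rw [Matrix.mul_apply, transpose_apply, incMatrix_apply_mul_incMatrix_apply,
    Set.indicator_apply]
  simp only [incidenceSet, Set.mem_inter_iff, Set.mem_ofPred_eq, Pi.one_apply, sum_boole,
    Nat.card_eq_fintype_card, Fintype.card_subtype, Nat.cast_id]
  exact congrArg _ (filter_congr fun e _ => by tauto)

lemma swCount_eq_incMatrix_mul_transpose_pow (k : ℕ) (x y : V) :
    swCount G k x y = ((G.incMatrix ℕ * (G.incMatrix ℕ)ᵀ) ^ k) x y := by
  induction k generalizing x with
  | zero => simp [swCount_zero, one_apply]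
  | succ k ih =>
    rw [swCount_succ, pow_succ', Matrix.mul_apply]
    simp only [ih, incMatrix_mul_transpose_apply_eq_card]

variable [DecidableRel G.subdivision.Adj]

lemma adjMatrix_subdivision_pow_two_mul_apply (k : ℕ) (x y : V) :
    (G.subdivision.adjMatrix ℕ ^ (2 * k)) (.inl x) (.inl y) =
      ((G.incMatrix ℕ * (G.incMatrix ℕ)ᵀ) ^ k) x y := by
  rw [pow_mul, adjMatrix_subdivision, sq, fromBlocks_multiply]
  simp [fromBlocks_diagonal_pow]

lemma swCount_eq_adjMatrix_subdivision_pow (k : ℕ) (x y : V) :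
    swCount G k x y = (G.subdivision.adjMatrix ℕ ^ (2 * k)) (.inl x) (.inl y) := by
  rw [swCount_eq_incMatrix_mul_transpose_pow, adjMatrix_subdivision_pow_two_mul_apply]

end

/-- The vertices `v 0, s(v 0, v 1), v 1, s(v 1, v 2), …` of the subdivided walk `v 0, v 1, …`. -/
def subdivisionSeq (v : ℕ → V) (j : ℕ) : V ⊕ Sym2 V :=
  if j % 2 = 0 then .inl (v (j / 2)) else .inr s(v (j / 2), v (j / 2 + 1))

@[simp] lemma subdivisionSeq_two_mul (v : ℕ → V) (i : ℕ) :
    subdivisionSeq v (2 * i) = .inl (v i) := by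
  simp [subdivisionSeq]

@[simp] lemma subdivisionSeq_two_mul_add_one (v : ℕ → V) (i : ℕ) :
    subdivisionSeq v (2 * i + 1) = .inr s(v i, v (i + 1)) := by
  have hmod : (2 * i + 1) % 2 = 1 := by omega
  have hdiv : (2 * i + 1) / 2 = i := by omega
  simp [subdivisionSeq, hmod, hdiv]

lemma injOn_subdivisionSeq {v : ℕ → V} {c : ℕ} (hinj : Set.InjOn v (Set.Iic (c + 1))) :
    Set.InjOn (subdivisionSeq v) (Set.Iic (2 * c + 1)) := by
  intro j hj j' hj' h
  simp only [Set.mem_Iic] at hj hj'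
  have hv : ∀ {i i'}, i ≤ c + 1 → i' ≤ c + 1 → v i = v i' → i = i' := fun hi hi' h =>
    hinj (Set.mem_Iic.mpr hi) (Set.mem_Iic.mpr hi') h
  obtain ⟨i, rfl | rfl⟩ := Nat.even_or_odd' j <;> obtain ⟨i', rfl | rfl⟩ := Nat.even_or_odd' j' <;>
    simp only [subdivisionSeq_two_mul, subdivisionSeq_two_mul_add_one, Sum.inl.injEq,
      Sum.inr.injEq, reduceCtorEq, Sym2.eq_iff] at h
  · rw [hv (by omega) (by omega) h]
  · rcases h with ⟨h, -⟩ | ⟨h, h'⟩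
    · rw [hv (by omega) (by omega) h]
    · have := hv (by omega) (by omega) h
      have := hv (by omega) (by omega) h'
      omega

lemma subdivision_adj_subdivisionSeq {v : ℕ → V} {j : ℕ}
    (hadj : G.Adj (v (j / 2)) (v (j / 2 + 1))) :
    G.subdivision.Adj (subdivisionSeq v j) (subdivisionSeq v (j + 1)) := by
  obtain ⟨i, rfl | rfl⟩ := Nat.even_or_odd' j
  · simpa using hadj
  · rw [show 2 * i + 1 + 1 = 2 * (i + 1) by ring]
    have hdiv : (2 * i + 1) / 2 = i := by omega
    simpa [hdiv] using hadj

theorem isPendantPath_subdivision {v : ℕ → V} {c : ℕ} (hinj : Set.InjOn v (Set.Iic (c + 1)))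
    (hadj : ∀ i ≤ c, G.Adj (v i) (v (i + 1)))
    (hnbr : ∀ i, 2 * i < c → ∀ w, G.Adj (v i) w → w = v (i - 1) ∨ w = v (i + 1)) :
    G.subdivision.IsPendantPath (subdivisionSeq v) c where
  injOn := injOn_subdivisionSeq hinj
  adj j hj := G.subdivision_adj_subdivisionSeq (hadj _ (by omega))
  eq_or_eq_of_adj j hj y hy := by
    obtain ⟨i, rfl | rfl⟩ := Nat.even_or_odd' j
    · rcases y with u | e
      · simp at hy
      simp only [subdivisionSeq_two_mul, subdivision_adj_inl_inr] at hy
      obtain ⟨w, rfl⟩ := Sym2.mem_iff_exists.mp hy.2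
      have hw : G.Adj (v i) w := hy.1
      rcases hnbr i (by omega) w hw with rfl | rfl
      · obtain rfl | hi := Nat.eq_zero_or_pos i
        · exact absurd hw G.irrefl
        left
        rw [show 2 * i - 1 = 2 * (i - 1) + 1 by omega, subdivisionSeq_two_mul_add_one,
          Nat.sub_add_cancel hi, Sym2.eq_swap]
      · simp
    · rcases y with u | e
      · simp only [subdivisionSeq_two_mul_add_one, subdivision_adj_inr_inl, Sym2.mem_iff] at hy
        rcases hy.2 with rfl | rfl
        · simp
        · right
          rw [show 2 * i + 1 + 1 = 2 * (i + 1) by ring, subdivisionSeq_two_mul]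
      · simp at hy

end SimpleGraph

theorem swCount_closed_le_of_path_general {V : Type*} [Fintype V]
    (G : SimpleGraph V) [DecidableRel G.Adj]
    {x y : V} (p : G.Walk x y) (hp : p.IsPath) {l : ℕ} (hl : p.length = l)
    (hdeg0 : G.degree x = 1)
    (r s : ℕ) (hrs : r < s) (hsum : r + s ≤ l - 1)
    (hdeg : ∀ i : ℕ, 0 < i → 2 * i < r + s → G.degree (p.getVert i) = 2) :
    (∀ k : ℕ, swCount G k (p.getVert r) (p.getVert r) ≤
        swCount G k (p.getVert s) (p.getVert s)) ∧
    (∃ k : ℕ, swCount G k (p.getVert r) (p.getVert r) <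
        swCount G k (p.getVert s) (p.getVert s)) := by
  classical
  subst hl
  have hP : G.subdivision.IsPendantPath (SimpleGraph.subdivisionSeq p.getVert) (r + s) := by
    refine G.isPendantPath_subdivision (hp.getVert_injOn.mono fun i hi => ?_)
      (fun i hi => p.adj_getVert_succ (by omega)) fun i hi w hw => ?_
    · simp only [Set.mem_Iic, Set.mem_ofPred_eq] at hi ⊢
      omega
    obtain rfl | hi0 := Nat.eq_zero_or_pos i
    · exact .inr (p.eq_getVert_one_of_adj (by omega) hdeg0 (by simpa using hw))
    · exact hp.eq_or_eq_of_adj_getVert hi0 (by omega) (hdeg i hi0 hi) hw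
  simp only [SimpleGraph.swCount_eq_adjMatrix_subdivision_pow, ← SimpleGraph.subdivisionSeq_two_mul]
  refine ⟨fun k => ?_, 2 * r + 1, ?_⟩
  · simpa [show 2 * (r + s) - 2 * r = 2 * s by omega] using
      hP.adjMatrix_pow_apply_le (i := 2 * r) (j := 2 * r) (by omega) (by omega) (2 * k)
  · simpa [show 2 * (r + s) - 2 * r = 2 * s by omega,
      show 2 * (2 * r) + 2 = 2 * (2 * r + 1) by ring]
      using hP.adjMatrix_pow_apply_lt (i := 2 * r) (by omega)

/-- Along a pendent path, the closed semi-edge walk counts at the vertex nearer the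
pendent end are dominated by those at the vertex farther from it. -/
theorem swCount_closed_le_of_path {V : Type*} [Fintype V] [DecidableEq V]
    (G : SimpleGraph V) [DecidableRel G.Adj]
    {x y : V} (p : G.Walk x y) (hp : p.IsPath) {l : ℕ} (hl : p.length = l)
    (hdeg0 : G.degree x = 1)
    (r s : ℕ) (hrs : r < s) (hsum : r + s ≤ l - 1)
    (hdeg : ∀ i : ℕ, 0 < i → 2 * i < r + s → G.degree (p.getVert i) = 2) :
    (∀ k : ℕ, swCount G k (p.getVert r) (p.getVert r) ≤
        swCount G k (p.getVert s) (p.getVert s)) ∧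
    (∃ k : ℕ, swCount G k (p.getVert r) (p.getVert r) <
        swCount G k (p.getVert s) (p.getVert s)) :=
  swCount_closed_le_of_path_general G p hp hl hdeg0 r s hrs hsum hdeg
end

section
/- Let G be a graph and v, u vertices of G with deg(v) < deg(u), and suppose every non-pendent neighbor of v lies in N^{np}(u) ∪ {u}, where N^{np}(x) denotes the set of neighbors of x having degree at least 2. Then |SW_k(G;v,v)| ≤ |SW_k(G;u,u)| for all k ≥ 0, with strict inequality for some k. -/
open scoped BigOperators

universe u

/-!
Let `Q = D + A` be the signless Laplacian. Peeling off the first semi-edge of a walk gives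
`swCount G k x y = (Q ^ k) x y`: from `x` one may step to `x` along any of its `deg x` edges,
or to a neighbour along the unique edge joining them.

Put `f_k = Q ^ k (e_u + e_v)`. By induction on `k`, `f_k v ≤ f_k u` and the sum of `f_k` over
the pendent neighbours of `v` is at most `f_k v`. A pendent neighbour `p` sees only `v`, so
`(Q f) p = f p + f v`, which keeps the second invariant; for the first, the pendent neighbours
of `v` contribute at most `f v`, which the surplus `deg u - deg v ≥ 1` absorbs, and every other
neighbour of `v` is `u` or a neighbour of `u`. As `Q ^ k` is symmetric, `f_k v ≤ f_k u` reads
`(Q ^ k) v v ≤ (Q ^ k) u u`; at `k = 1` this is `deg v < deg u`.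
-/

open scoped Matrix

section

variable {V : Type*}

section SemiEdgeWalk

abbrev SemiEdgeWalk (G : SimpleGraph V) (k : ℕ) (x y : V) : Type _ :=
  { p : (Fin (k + 1) → V) × (Fin k → Sym2 V) //
    (∀ i : Fin k, p.2 i ∈ G.edgeSet ∧ p.1 i.castSucc ∈ p.2 i ∧ p.1 i.succ ∈ p.2 i) ∧
    p.1 0 = x ∧ p.1 (Fin.last k) = y }

lemma swCount_eq_card_semiEdgeWalk (G : SimpleGraph V) (k : ℕ) (x y : V) :
    swCount G k x y = Nat.card (SemiEdgeWalk G k x y) := rfl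

def SemiEdgeWalk.firstStepEquiv (G : SimpleGraph V) (k : ℕ) (x y z : V) :
    {w : SemiEdgeWalk G (k + 1) x y // w.1.1 1 = z} ≃
      {e : Sym2 V // e ∈ G.edgeSet ∧ x ∈ e ∧ z ∈ e} × SemiEdgeWalk G k z y where
  toFun w :=
    ⟨⟨w.1.1.2 0, (w.1.2.1 0).1,
        by simpa [w.1.2.2.1] using (w.1.2.1 0).2.1,
        by simpa [Fin.succ_zero_eq_one, w.2] using (w.1.2.1 0).2.2⟩,
      ⟨(fun i => w.1.1.1 i.succ, fun i => w.1.1.2 i.succ),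
        fun i => ⟨(w.1.2.1 i.succ).1,
          by simpa [← Fin.succ_castSucc] using (w.1.2.1 i.succ).2.1,
          (w.1.2.1 i.succ).2.2⟩,
        by simpa [Fin.succ_zero_eq_one] using w.2,
        by simpa [Fin.succ_last] using w.1.2.2.2⟩⟩
  invFun q :=
    ⟨⟨⟨Fin.cons x q.2.1.1, Fin.cons q.1.1 q.2.1.2⟩,
        fun i => by
          induction i using Fin.cases with
          | zero => simpa [q.2.2.2.1] using q.1.2
          | succ j => simpa [← Fin.succ_castSucc] using q.2.2.1 j,
        rfl,
        by simpa [← Fin.succ_last] using q.2.2.2.2⟩,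
      q.2.2.2.1⟩
  left_inv w := by
    ext : 2
    refine Prod.ext (funext fun i => ?_) (funext fun i => ?_) <;>
      induction i using Fin.cases
    · exact w.1.2.2.1.symm
    all_goals simp
  right_inv q := by
    refine Prod.ext (Subtype.ext ?_) (Subtype.ext (Prod.ext ?_ ?_)) <;> simp

lemma swCount_zero [DecidableEq V] (G : SimpleGraph V) (x y : V) :
    swCount G 0 x y = (1 : Matrix V V ℕ) x y := by
  rw [Matrix.one_apply, swCount_eq_card_semiEdgeWalk]
  split_ifs with h
  · subst h
    refine Nat.card_eq_one_iff_unique.mpr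
      ⟨⟨fun a b => Subtype.ext (Prod.ext (funext fun i => ?_) (funext finZeroElim))⟩,
        ⟨⟨(fun _ => x, finZeroElim), finZeroElim, rfl, rfl⟩⟩⟩
    rw [Fin.fin_one_eq_zero i, a.2.2.1, b.2.2.1]
  · exact Nat.card_eq_zero.mpr (.inl ⟨fun w => h (w.2.2.1.symm.trans w.2.2.2)⟩)

end SemiEdgeWalk

section SignlessLaplacian

variable (R : Type*) [Semiring R] [Fintype V] [DecidableEq V] (G : SimpleGraph V)
  [DecidableRel G.Adj]

def signlessLapMatrix : Matrix V V R :=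
  Matrix.diagonal (fun x => (G.degree x : R)) + G.adjMatrix R

variable {R} in
lemma signlessLapMatrix_mulVec_apply (f : V → R) (x : V) :
    (signlessLapMatrix R G *ᵥ f) x = G.degree x * f x + ∑ w ∈ G.neighborFinset x, f w := by
  rw [signlessLapMatrix, Matrix.add_mulVec, Pi.add_apply, Matrix.mulVec_diagonal,
    SimpleGraph.adjMatrix_mulVec_apply]

lemma isSymm_signlessLapMatrix : (signlessLapMatrix R G).IsSymm :=
  (Matrix.isSymm_diagonal _).add (G.isSymm_adjMatrix)

end SignlessLaplacian

section WalkCount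

variable [Fintype V] [DecidableEq V] (G : SimpleGraph V) [DecidableRel G.Adj]

lemma card_edges_mem_mem_eq_signlessLapMatrix_apply (x z : V) :
    Nat.card {e : Sym2 V // e ∈ G.edgeSet ∧ x ∈ e ∧ z ∈ e} =
      signlessLapMatrix ℕ G x z := by
  rw [signlessLapMatrix, Matrix.add_apply, Matrix.diagonal_apply, SimpleGraph.adjMatrix_apply]
  by_cases hxz : x = z
  · subst hxz
    rw [if_pos rfl, if_neg (G.irrefl), add_zero, ← G.card_incidenceSet_eq_degree,
      ← Nat.card_eq_fintype_card]
    exact Nat.card_congr (Equiv.subtypeEquivRight fun e => by simp [SimpleGraph.incidenceSet])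
  · rw [if_neg hxz, zero_add]
    simp_rw [Sym2.mem_and_mem_iff hxz]
    split_ifs with h
    · exact Nat.card_eq_one_iff_unique.mpr
        ⟨⟨fun a b => Subtype.ext (a.2.2.trans b.2.2.symm)⟩, ⟨⟨s(x, z), h, rfl⟩⟩⟩
    · exact Nat.card_eq_zero.mpr (.inl ⟨fun e => h (G.mem_edgeSet.mp (e.2.2 ▸ e.2.1))⟩)

lemma swCount_succ (k : ℕ) (x y : V) :
    swCount G (k + 1) x y = ∑ z, signlessLapMatrix ℕ G x z * swCount G k z y := by
  calc swCount G (k + 1) x y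
      = Nat.card (Σ z, {w : SemiEdgeWalk G (k + 1) x y // w.1.1 1 = z}) :=
        (Nat.card_congr (Equiv.sigmaFiberEquiv _)).symm
    _ = ∑ z, signlessLapMatrix ℕ G x z * swCount G k z y := by
        rw [Nat.card_sigma]
        refine Finset.sum_congr rfl fun z _ => ?_
        rw [Nat.card_congr (SemiEdgeWalk.firstStepEquiv G k x y z), Nat.card_prod,
          card_edges_mem_mem_eq_signlessLapMatrix_apply, swCount_eq_card_semiEdgeWalk]

lemma swCount_eq_pow_apply (k : ℕ) (x y : V) :
    swCount G k x y = (signlessLapMatrix ℕ G ^ k) x y := by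
  induction k generalizing x with
  | zero => rw [swCount_zero, pow_zero]
  | succ k ih => simp only [swCount_succ, ih, pow_succ', Matrix.mul_apply]

end WalkCount

section Domination

variable [Fintype V] (G : SimpleGraph V) [DecidableRel G.Adj]

lemma SimpleGraph.neighborFinset_eq_singleton_of_degree_eq_one {p v : V} (hp : G.degree p = 1)
    (hpv : G.Adj p v) : G.neighborFinset p = {v} := by
  obtain ⟨a, ha⟩ := Finset.card_eq_one.mp ((G.card_neighborFinset_eq_degree p).trans hp)
  have hv := (G.mem_neighborFinset p v).mpr hpv
  rw [ha, Finset.mem_singleton] at hv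
  rw [ha, hv]

def pendentNeighborFinset (v : V) : Finset V :=
  {w ∈ G.neighborFinset v | G.degree w = 1}

variable [DecidableEq V]

lemma sum_pendentNeighborFinset_mulVec_le (f : V → ℕ) (v : V) :
    ∑ p ∈ pendentNeighborFinset G v, (signlessLapMatrix ℕ G *ᵥ f) p ≤
      (signlessLapMatrix ℕ G *ᵥ f) v := by
  have hpend : ∀ p ∈ pendentNeighborFinset G v,
      (signlessLapMatrix ℕ G *ᵥ f) p = f p + f v := fun p hp => by
    obtain ⟨hvp, hp1⟩ := Finset.mem_filter.mp hp
    rw [signlessLapMatrix_mulVec_apply, hp1, Nat.cast_one, one_mul,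
      G.neighborFinset_eq_singleton_of_degree_eq_one hp1 ((G.mem_neighborFinset v p).mp hvp).symm,
      Finset.sum_singleton]
  have hcard : (pendentNeighborFinset G v).card ≤ G.degree v :=
    (Finset.card_filter_le _ _).trans (G.card_neighborFinset_eq_degree v).le
  have hsum : ∑ p ∈ pendentNeighborFinset G v, f p ≤ ∑ w ∈ G.neighborFinset v, f w :=
    Finset.sum_le_sum_of_subset (Finset.filter_subset _ _)
  rw [Finset.sum_congr rfl hpend, Finset.sum_add_distrib, Finset.sum_const, smul_eq_mul,
    signlessLapMatrix_mulVec_apply, Nat.cast_id]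
  nlinarith [Nat.mul_le_mul_right (f v) hcard]

variable {G} {v u : V} (hdeg : G.degree v < G.degree u)
  (hnp : ∀ w : V, G.Adj v w → 2 ≤ G.degree w → w = u ∨ G.Adj u w)
include hdeg hnp

lemma signlessLapMatrix_mulVec_apply_le {f : V → ℕ} (hfu : f v ≤ f u)
    (hfP : ∑ p ∈ pendentNeighborFinset G v, f p ≤ f v) :
    (signlessLapMatrix ℕ G *ᵥ f) v ≤ (signlessLapMatrix ℕ G *ᵥ f) u := by
  set N := {w ∈ G.neighborFinset v | ¬G.degree w = 1}
  have hsplit : ∑ w ∈ G.neighborFinset v, f w =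
      ∑ p ∈ pendentNeighborFinset G v, f p + ∑ w ∈ N, f w :=
    (Finset.sum_filter_add_sum_filter_not _ _ _).symm
  rw [signlessLapMatrix_mulVec_apply, signlessLapMatrix_mulVec_apply, Nat.cast_id, Nat.cast_id,
    hsplit]
  have hN : ∀ w ∈ N, w ≠ v ∧ (w = u ∨ G.Adj u w) := fun w hw => by
    obtain ⟨hvw, hw1⟩ := Finset.mem_filter.mp hw
    rw [G.mem_neighborFinset] at hvw
    have hw0 : 0 < G.degree w := (G.degree_pos_iff_exists_adj w).mpr ⟨v, hvw.symm⟩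
    exact ⟨hvw.ne', hnp w hvw (by omega)⟩
  have hfu' := Nat.mul_le_mul_left (G.degree v) hfu
  have hdeg' : (G.degree v + 1) * f u ≤ G.degree u * f u := Nat.mul_le_mul_right (f u) hdeg
  by_cases huv : G.Adj u v
  · have hNu : ∑ w ∈ N, f w ≤ f u + ∑ w ∈ (G.neighborFinset u).erase v, f w := by
      rw [← Finset.sum_insert fun h => (G.notMem_neighborFinset_self u)
        (Finset.mem_of_mem_erase h)]
      refine Finset.sum_le_sum_of_subset fun w hw => ?_
      obtain ⟨hwv, rfl | huw⟩ := hN w hw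
      · exact Finset.mem_insert_self _ _
      · exact Finset.mem_insert_of_mem (Finset.mem_erase.mpr ⟨hwv, by simpa using huw⟩)
    rw [← Finset.add_sum_erase _ _ ((G.mem_neighborFinset u v).mpr huv)]
    linarith
  · have hNu : ∑ w ∈ N, f w ≤ ∑ w ∈ G.neighborFinset u, f w := by
      refine Finset.sum_le_sum_of_subset fun w hw => ?_
      obtain ⟨_, rfl | huw⟩ := hN w hw
      · exact absurd (G.mem_neighborFinset _ _ |>.mp (Finset.mem_filter.mp hw).1).symm huv
      · simpa using huw
    linarith

lemma pow_mulVec_apply_le {f : V → ℕ} (hfu : f v ≤ f u)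
    (hfP : ∑ p ∈ pendentNeighborFinset G v, f p ≤ f v) (k : ℕ) :
    (signlessLapMatrix ℕ G ^ k *ᵥ f) v ≤ (signlessLapMatrix ℕ G ^ k *ᵥ f) u ∧
      ∑ p ∈ pendentNeighborFinset G v, (signlessLapMatrix ℕ G ^ k *ᵥ f) p ≤
        (signlessLapMatrix ℕ G ^ k *ᵥ f) v := by
  induction k with
  | zero => simpa using ⟨hfu, hfP⟩
  | succ k ih =>
    rw [pow_succ', ← Matrix.mulVec_mulVec]
    exact ⟨signlessLapMatrix_mulVec_apply_le hdeg hnp ih.1 ih.2,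
      sum_pendentNeighborFinset_mulVec_le G _ v⟩

end Domination

end

/-- If `deg v < deg u` and every non-pendent neighbor of `v` is `u` or a non-pendent
neighbor of `u`, then the closed semi-edge walk counts at `v` are dominated by those
at `u`, strictly for some length. -/
theorem swCount_closed_lt_of_degree_lt {V : Type*} [Fintype V]
    (G : SimpleGraph V) [DecidableRel G.Adj] (v u : V)
    (hdeg : G.degree v < G.degree u)
    (hnp : ∀ w : V, G.Adj v w → 2 ≤ G.degree w → w = u ∨ G.Adj u w) :
    (∀ k : ℕ, swCount G k v v ≤ swCount G k u u) ∧
    (∃ k : ℕ, swCount G k v v < swCount G k u u) := by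
  classical
  have huv : u ≠ v := fun h => hdeg.ne (h ▸ rfl)
  have hu : u ∉ pendentNeighborFinset G v := fun hu => by
    have hv0 : 0 < G.degree v := (G.degree_pos_iff_exists_adj v).mpr
      ⟨u, (G.mem_neighborFinset v u).mp (Finset.mem_filter.mp hu).1⟩
    have := (Finset.mem_filter.mp hu).2
    omega
  have hv : v ∉ pendentNeighborFinset G v := fun hv =>
    G.notMem_neighborFinset_self v (Finset.mem_filter.mp hv).1
  have hdom := pow_mulVec_apply_le hdeg hnp (f := Pi.single u 1 + Pi.single v 1)
    (by simp [huv, huv.symm])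
    (by
      rw [Finset.sum_eq_zero fun p hp => by
        simp [ne_of_mem_of_not_mem hp hu, ne_of_mem_of_not_mem hp hv]]
      exact Nat.zero_le _)
  refine ⟨fun k => ?_, 1, ?_⟩
  · have hk := (hdom k).1
    have hsymm := (isSymm_signlessLapMatrix ℕ G).pow k |>.apply u v
    simp only [Matrix.mulVec_add, Matrix.mulVec_single_one, Pi.add_apply, Matrix.col_apply]
      at hk
    rw [swCount_eq_pow_apply, swCount_eq_pow_apply]
    omega
  · simpa [swCount_eq_pow_apply, signlessLapMatrix] using hdeg
end

section
/- For every n ≥ 4, SLEE(C_n) < SLEE(G_(2)), where C_n is the cycle on n vertices and G_(2) is the graph obtained from the cycle C_{n−1} by attaching a single pendent vertex. -/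
open scoped BigOperators

universe u

/-!
Write the signless Laplacian as `Q = N Nᵀ` with `N` the vertex-edge incidence matrix. Then
`tr Q^k = tr (Nᵀ N)^k` for `k ≥ 1`, and the edge Gram matrix `Nᵀ N` is `2` on the diagonal and
`|e ∩ f| ∈ {0, 1}` off it. Number the edges of `C_n` as `{i, i + 1}` and match them with the edges
of `G₍₂₎`: `{n - 2, n - 1}` goes to the edge closing `C_{n-1}` and `{n - 1, 0}` to the pendent edge.
Folding the vertex `n - 1` onto `0` maps every edge into its partner, so edges that meet still meet
and the Gram matrix of `C_n` is entrywise dominated by that of `G₍₂₎`; the disjoint edges `{0, 1}`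
and `{n - 2, n - 1}` become adjacent, so `tr Q^2` grows strictly. As both graphs have `n` vertices,
`SLEE = ∑ₖ tr Q^k / k!` gives the inequality termwise.
-/

open Finset Function

namespace Matrix

variable {m n R : Type*} [Fintype m] [Fintype n]

theorem trace_mul_pow_succ_comm [CommSemiring R] [DecidableEq m] [DecidableEq n]
    (A : Matrix m n R) (B : Matrix n m R) (k : ℕ) :
    ((A * B) ^ (k + 1)).trace = ((B * A) ^ (k + 1)).trace := by
  have hpow : ∀ j : ℕ, (A * B) ^ j * A = A * (B * A) ^ j := by
    intro j
    induction j with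
    | zero => simp
    | succ j ih =>
      rw [pow_succ', Matrix.mul_assoc, ih, pow_succ']
      simp only [Matrix.mul_assoc]
  rw [pow_succ, ← Matrix.mul_assoc, hpow, trace_mul_comm, ← Matrix.mul_assoc, ← pow_succ']

section OrderedSemiring

variable [DecidableEq n] [Semiring R] [PartialOrder R] [IsOrderedRing R] {A B : Matrix n n R}

theorem pow_apply_le_pow_apply (hA : ∀ i j, 0 ≤ A i j) (hAB : ∀ i j, A i j ≤ B i j) (k : ℕ)
    (i j : n) : (A ^ k) i j ≤ (B ^ k) i j := by
  have hB : ∀ i j, 0 ≤ B i j := fun i j => (hA i j).trans (hAB i j)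
  induction k generalizing j with
  | zero => rfl
  | succ k ih =>
    rw [pow_succ, pow_succ, mul_apply, mul_apply]
    exact sum_le_sum fun l _ => mul_le_mul (ih l) (hAB l j) (hA l j) (pow_apply_nonneg hB k i l)

theorem trace_pow_le_trace_pow (hA : ∀ i j, 0 ≤ A i j) (hAB : ∀ i j, A i j ≤ B i j) (k : ℕ) :
    (A ^ k).trace ≤ (B ^ k).trace :=
  sum_le_sum fun i _ => pow_apply_le_pow_apply hA hAB k i i

end OrderedSemiring

theorem trace_sq_lt_trace_sq [DecidableEq n] [Semiring R] [PartialOrder R] [IsStrictOrderedRing R]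
    {A B : Matrix n n R} (hA : ∀ i j, 0 ≤ A i j)
    (hAB : ∀ i j, A i j ≤ B i j) {i j : n} (hij : A i j < B i j) (hji : 0 < B j i) :
    (A ^ 2).trace < (B ^ 2).trace := by
  have hB : ∀ i j, 0 ≤ B i j := fun i j => (hA i j).trans (hAB i j)
  have hle : ∀ a b, A a b * A b a ≤ B a b * B b a := fun a b =>
    mul_le_mul (hAB a b) (hAB b a) (hA b a) (hB a b)
  have hlt : A i j * A j i < B i j * B j i :=
    calc A i j * A j i ≤ A i j * B j i := mul_le_mul_of_nonneg_left (hAB j i) (hA i j)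
      _ < B i j * B j i := mul_lt_mul_of_pos_right hij hji
  simp only [trace, diag, sq, mul_apply]
  exact sum_lt_sum (fun a _ => sum_le_sum fun b _ => hle a b)
    ⟨i, mem_univ _, sum_lt_sum (fun b _ => hle i b) ⟨j, mem_univ _, hlt⟩⟩

theorem IsHermitian.trace_pow {𝕜 : Type*} [RCLike 𝕜] [DecidableEq n] {A : Matrix n n 𝕜}
    (hA : A.IsHermitian) (k : ℕ) : (A ^ k).trace = ∑ i, (hA.eigenvalues i : 𝕜) ^ k := by
  conv_lhs => rw [hA.spectral_theorem, ← map_pow, Unitary.conjStarAlgAut_apply, trace_mul_cycle,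
    Unitary.coe_star_mul_self, one_mul, diagonal_pow, trace_diagonal]
  simp

end Matrix

open Matrix
open scoped Nat

theorem hasSum_trace_signLap_pow_div_factorial {V : Type*} [Fintype V] [DecidableEq V]
    (G : SimpleGraph V) : HasSum (fun k => (signLap G ^ k).trace / k !) (SLEE G) := by
  have htrace : ∀ k, (signLap G ^ k).trace = ∑ i, signLapEig G i ^ k := fun k => by
    convert (signLap_isHermitian G).trace_pow k using 3 with i
    -- `signLapEig` is built with `Classical.decEq V`
    unfold signLapEig
    congr!
  have h := hasSum_sum fun i (_ : i ∈ univ) =>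
    NormedSpace.expSeries_div_hasSum_exp (signLapEig G i)
  simp only [← Real.exp_eq_exp_ℝ, ← sum_div] at h
  simpa [htrace, SLEE] using h

theorem signLap_eq_incMatrix_mul_transpose {V : Type*} [Fintype V] [DecidableEq V]
    (G : SimpleGraph V) [DecidableRel G.Adj] :
    signLap G = G.incMatrix ℝ * (G.incMatrix ℝ)ᵀ := by
  rw [G.incMatrix_mul_transpose]
  ext v w
  by_cases h : v = w
  · subst h
    simp only [signLap, Matrix.add_apply, diagonal_apply_eq, SimpleGraph.adjMatrix_apply,
      SimpleGraph.irrefl, if_false, add_zero, of_apply, if_true, Nat.cast_inj]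
    congr!
  · simp [signLap, h]

theorem Sym2.card_filter_mem_of_not_isDiag {α : Type*} [Fintype α] [DecidableEq α] {e : Sym2 α}
    (he : ¬e.IsDiag) : #{v | v ∈ e} = 2 := by
  convert (Sym2.card_toFinset e).trans (if_neg he) using 2
  ext v
  simp

section EdgeEnumeration

variable {V W ι : Type*} [Fintype V] [Fintype W] [DecidableEq V] [DecidableEq W]

def incMatrixOf (f : ι → Sym2 V) : Matrix V ι ℝ := of fun v i => if v ∈ f i then 1 else 0

theorem signLap_eq_incMatrixOf_mul_transpose [Fintype ι] {G : SimpleGraph V} {f : ι → Sym2 V}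
    (hf : Injective f) (hfG : Set.range f = G.edgeSet) :
    signLap G = incMatrixOf f * (incMatrixOf f)ᵀ := by
  classical
  rw [signLap_eq_incMatrix_mul_transpose]
  ext v w
  simp only [mul_apply, transpose_apply]
  symm
  refine Fintype.sum_of_injective f hf _ _ (fun e he => ?_) (fun i => ?_)
  · have : e ∉ G.edgeSet := hfG ▸ he
    rw [G.incMatrix_of_notMem_incidenceSet fun h => this h.1, zero_mul]
  · have : f i ∈ G.edgeSet := hfG ▸ Set.mem_range_self i
    simp [incMatrixOf, SimpleGraph.incMatrix_apply', SimpleGraph.incidenceSet, this]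

theorem transpose_mul_incMatrixOf_apply (f : ι → Sym2 V) (i j : ι) :
    ((incMatrixOf f)ᵀ * incMatrixOf f) i j = #{v | v ∈ f i ∧ v ∈ f j} := by
  simp [mul_apply, incMatrixOf, ← ite_and, sum_boole, and_comm]

theorem transpose_mul_incMatrixOf_le {f : ι → Sym2 V} {g : ι → Sym2 W} (hf : Injective f)
    (hfd : ∀ i, ¬(f i).IsDiag) (hgd : ∀ i, ¬(g i).IsDiag) {ψ : V → W}
    (hψ : ∀ i, ∀ v ∈ f i, ψ v ∈ g i) (i j : ι) :
    ((incMatrixOf f)ᵀ * incMatrixOf f) i j ≤ ((incMatrixOf g)ᵀ * incMatrixOf g) i j := by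
  simp only [transpose_mul_incMatrixOf_apply, Nat.cast_le]
  obtain rfl | hij := eq_or_ne i j
  · simp only [and_self, Sym2.card_filter_mem_of_not_isDiag (hfd i),
      Sym2.card_filter_mem_of_not_isDiag (hgd i), le_refl]
  obtain h0 | ⟨v, hv⟩ := (filter (fun v => v ∈ f i ∧ v ∈ f j) univ).eq_empty_or_nonempty
  · simp [h0]
  have hv' := (mem_filter.1 hv).2
  -- two distinct edges share at most one vertex
  calc #{v | v ∈ f i ∧ v ∈ f j} ≤ 1 := card_le_one.2 fun a ha b hb => by
        by_contra hab
        simp only [mem_filter, mem_univ, true_and] at ha hb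
        exact hij (hf (((Sym2.mem_and_mem_iff hab).1 ⟨ha.1, hb.1⟩).trans
          ((Sym2.mem_and_mem_iff hab).1 ⟨ha.2, hb.2⟩).symm))
    _ ≤ #{w | w ∈ g i ∧ w ∈ g j} := card_pos.2 ⟨ψ v, by simp [hψ i v hv'.1, hψ j v hv'.2]⟩

end EdgeEnumeration

theorem SLEE_lt_SLEE_of_edge_correspondence {V W ι : Type*} [Fintype V] [Fintype W] [Fintype ι]
    {G : SimpleGraph V} {H : SimpleGraph W} (hVW : Fintype.card V = Fintype.card W)
    {f : ι → Sym2 V} {g : ι → Sym2 W} (hf : Injective f) (hfG : Set.range f = G.edgeSet)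
    (hg : Injective g) (hgH : Set.range g = H.edgeSet) {ψ : V → W}
    (hψ : ∀ i, ∀ v ∈ f i, ψ v ∈ g i) {i j : ι} (hfij : ∀ v ∈ f i, v ∉ f j) {w : W}
    (hwi : w ∈ g i) (hwj : w ∈ g j) : SLEE G < SLEE H := by
  classical
  set A := (incMatrixOf f)ᵀ * incMatrixOf f
  set B := (incMatrixOf g)ᵀ * incMatrixOf g
  have hA : ∀ a b, 0 ≤ A a b := fun a b => by simp [A, transpose_mul_incMatrixOf_apply]
  have hAB : ∀ a b, A a b ≤ B a b := transpose_mul_incMatrixOf_le hf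
    (fun a => G.not_isDiag_of_mem_edgeSet (hfG ▸ Set.mem_range_self a))
    (fun a => H.not_isDiag_of_mem_edgeSet (hgH ▸ Set.mem_range_self a)) hψ
  have hGA : ∀ k, (signLap G ^ (k + 1)).trace = (A ^ (k + 1)).trace := fun k => by
    rw [signLap_eq_incMatrixOf_mul_transpose hf hfG, trace_mul_pow_succ_comm]
  have hHB : ∀ k, (signLap H ^ (k + 1)).trace = (B ^ (k + 1)).trace := fun k => by
    rw [signLap_eq_incMatrixOf_mul_transpose hg hgH, trace_mul_pow_succ_comm]
  have hAij : A i j < B i j := by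
    have hf0 : #{v | v ∈ f i ∧ v ∈ f j} = 0 := by
      simpa [Finset.card_eq_zero, filter_eq_empty_iff] using hfij
    have hg0 : 0 < #{v | v ∈ g i ∧ v ∈ g j} := Finset.card_pos.2 ⟨w, by simp [hwi, hwj]⟩
    simpa [A, B, transpose_mul_incMatrixOf_apply, hf0] using hg0
  have hBji : 0 < B j i := by
    have hg0 : 0 < #{v | v ∈ g j ∧ v ∈ g i} := Finset.card_pos.2 ⟨w, by simp [hwi, hwj]⟩
    simpa [B, transpose_mul_incMatrixOf_apply] using hg0
  refine hasSum_lt (i := 2) (fun k => ?_) ?_ (hasSum_trace_signLap_pow_div_factorial G)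
    (hasSum_trace_signLap_pow_div_factorial H)
  · rcases k with _ | k
    · simp [hVW]
    · rw [hGA, hHB]
      gcongr
      exact trace_pow_le_trace_pow hA hAB _
  · rw [hGA, hHB]
    gcongr
    exact trace_sq_lt_trace_sq hA hAB hAij hBji

section Cycle

variable {k : ℕ} [NeZero k]

theorem Fin.val_add_one_mod_eq_iff (i j : Fin k) : (i.val + 1) % k = j.val ↔ j = i + 1 := by
  rw [Fin.ext_iff, Fin.val_add, Fin.val_one', Nat.add_mod_mod, eq_comm]

def cycleEdge (k : ℕ) [NeZero k] (i : Fin k) : Sym2 (Fin k) := s(i, i + 1)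

theorem edgeSet_cycleGraph' (hk : 2 ≤ k) :
    (cycleGraph' k).edgeSet = Set.range (cycleEdge k) := by
  have hne : ∀ i : Fin k, i ≠ i + 1 := fun i => by
    simpa [Fin.one_eq_zero_iff] using (by omega : k ≠ 1)
  ext e
  induction e using Sym2.ind with | h a b => ?_
  simp only [SimpleGraph.mem_edgeSet, cycleGraph', SimpleGraph.fromRel_adj,
    Fin.val_add_one_mod_eq_iff, Set.mem_range, cycleEdge, Sym2.eq_iff]
  constructor
  · rintro ⟨-, rfl | rfl⟩
    · exact ⟨a, Or.inl ⟨rfl, rfl⟩⟩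
    · exact ⟨b, Or.inr ⟨rfl, rfl⟩⟩
  · rintro ⟨i, ⟨rfl, rfl⟩ | ⟨rfl, rfl⟩⟩
    · exact ⟨hne i, Or.inl rfl⟩
    · exact ⟨(hne i).symm, Or.inr rfl⟩

theorem cycleEdge_injective (hk : 3 ≤ k) : Injective (cycleEdge k) := by
  have htwo : (1 + 1 : Fin k) ≠ 0 := by
    simp [Fin.ext_iff, Fin.val_add, Nat.mod_eq_of_lt (show 1 < k by omega),
      Nat.mod_eq_of_lt (show 2 < k by omega)]
  intro i j h
  rcases Sym2.eq_iff.1 h with ⟨h, -⟩ | ⟨rfl, h⟩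
  · exact h
  · exact absurd (by simpa [add_assoc] using h) htwo

end Cycle

theorem CqP_adj_inl_inl {q : ℕ} {n : Fin q → ℕ} {a b : Fin q} :
    (CqP q n).Adj (.inl a) (.inl b) ↔ (cycleGraph' q).Adj a b := by
  simp [CqP, cycleGraph']

theorem CqP_adj_inl_inr {q : ℕ} {n : Fin q → ℕ} {a : Fin q} {s : Σ i, Fin (n i)} :
    (CqP q n).Adj (.inl a) (.inr s) ↔ s.1 = a ∧ s.2.val = 0 := by
  obtain ⟨i, x⟩ := s
  simp only [CqP, exists_and_left, SimpleGraph.fromRel_adj, ne_eq, reduceCtorEq,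
    not_false_eq_true, Sum.inl.injEq, false_and, exists_false, and_false, Sum.inr.injEq,
    Sigma.mk.injEq, exists_eq_left', or_false, false_or, and_self, or_self, true_and,
    and_congr_right_iff]
  rintro rfl
  constructor
  · rintro ⟨_, h⟩
    simp [eq_of_heq h]
  · intro hx
    exact ⟨by have := x.isLt; omega, heq_of_eq (Fin.ext hx)⟩

section Gmin2

variable {m : ℕ}

abbrev Gmin2Vertex (q : ℕ) := Fin q ⊕ Σ i : Fin q, Fin (if i.val = 0 then 1 else 0)

def pendant (m : ℕ) : Σ i : Fin (m + 1), Fin (if i.val = 0 then 1 else 0) := ⟨0, 0, by simp⟩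

theorem eq_pendant (s : Σ i : Fin (m + 1), Fin (if i.val = 0 then 1 else 0)) : s = pendant m := by
  obtain ⟨i, x⟩ := s
  obtain rfl : i = 0 := by
    by_contra h
    simpa [Fin.val_eq_zero_iff, h] using x.isLt
  obtain rfl : x = ⟨0, by simp⟩ := Fin.ext (by simpa using x.isLt)
  rfl

theorem card_Gmin2Vertex : Fintype.card (Gmin2Vertex (m + 1)) = m + 2 := by
  simp [Fintype.card_sum, Fintype.card_sigma, Fin.val_eq_zero_iff]

def gmin2Edge (m : ℕ) : Fin (m + 2) → Sym2 (Gmin2Vertex (m + 1)) :=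
  Fin.lastCases s(.inl 0, .inr (pendant m)) fun a => (cycleEdge (m + 1) a).map Sum.inl

def cycleToGmin2 (m : ℕ) : Fin (m + 2) → Gmin2Vertex (m + 1) := Fin.lastCases (.inl 0) .inl

@[simp]
theorem cycleToGmin2_castSucc (a : Fin (m + 1)) : cycleToGmin2 m a.castSucc = .inl a :=
  Fin.lastCases_castSucc a

@[simp]
theorem cycleToGmin2_last : cycleToGmin2 m (Fin.last _) = .inl 0 := Fin.lastCases_last

theorem cycleToGmin2_zero : cycleToGmin2 m 0 = .inl 0 := cycleToGmin2_castSucc 0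

theorem mem_gmin2Edge_of_mem_cycleEdge {i v : Fin (m + 2)} (h : v ∈ cycleEdge (m + 2) i) :
    cycleToGmin2 m v ∈ gmin2Edge m i := by
  rcases Sym2.mem_iff.1 h with rfl | rfl
  · induction v using Fin.lastCases <;> simp [gmin2Edge, cycleEdge]
  · induction i using Fin.lastCases with
    | last => simp [cycleToGmin2_zero, gmin2Edge]
    | cast a =>
      rw [Fin.coeSucc_eq_succ]
      induction a using Fin.lastCases with
      | last => simp [gmin2Edge, cycleEdge]
      | cast b =>
        rw [Fin.succ_castSucc, cycleToGmin2_castSucc]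
        simp [gmin2Edge, cycleEdge, Fin.coeSucc_eq_succ]

theorem gmin2Edge_injective (hm : 2 ≤ m) : Injective (gmin2Edge m) := by
  intro i j h
  induction i using Fin.lastCases <;> induction j using Fin.lastCases
  · rfl
  · simp [gmin2Edge, cycleEdge] at h
  · simp [gmin2Edge, cycleEdge] at h
  · simp only [gmin2Edge, Fin.lastCases_castSucc] at h
    rw [cycleEdge_injective (by omega) (Sym2.map.injective Sum.inl_injective h)]

theorem edgeSet_Gmin2 (hm : 1 ≤ m) : (Gmin2 (m + 2)).edgeSet = Set.range (gmin2Edge m) := by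
  -- `Gmin2 (m + 2)` lives on `Fin (m + 2 - 1) ⊕ …`; restate it over `Fin (m + 1)`
  show (CqP (m + 1) fun i => if i.val = 0 then 1 else 0).edgeSet = _
  ext e
  induction e using Sym2.ind with | h x y => ?_
  rw [SimpleGraph.mem_edgeSet, Set.mem_range, Fin.exists_fin_succ']
  simp only [gmin2Edge, Fin.lastCases_castSucc, Fin.lastCases_last]
  rcases x with a | s <;> rcases y with b | t
  · rw [CqP_adj_inl_inl, ← SimpleGraph.mem_edgeSet, edgeSet_cycleGraph' (by omega)]
    simp [cycleEdge]
  · rw [eq_pendant t, CqP_adj_inl_inr]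
    simp [cycleEdge, pendant]
  · rw [eq_pendant s, SimpleGraph.adj_comm, CqP_adj_inl_inr]
    simp [cycleEdge, pendant]
  · rw [eq_pendant s, eq_pendant t]
    simp [cycleEdge]

end Gmin2

/-- `SLEE(C_n) < SLEE(G₍₂₎)` for `n ≥ 4`. -/
theorem SLEE_cycle_lt_Gmin2 {n : ℕ} (hn : 4 ≤ n) :
    SLEE (cycleGraph' n) < SLEE (Gmin2 n) := by
  obtain ⟨m, rfl⟩ : ∃ m, n = m + 2 := ⟨n - 2, by omega⟩
  refine SLEE_lt_SLEE_of_edge_correspondence ((Fintype.card_fin _).trans card_Gmin2Vertex.symm)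
    (cycleEdge_injective (by omega))
    (edgeSet_cycleGraph' (by omega)).symm (gmin2Edge_injective (by omega))
    (edgeSet_Gmin2 (by omega)).symm (fun _ _ => mem_gmin2Edge_of_mem_cycleEdge)
    (i := (0 : Fin (m + 1)).castSucc) (j := (Fin.last m).castSucc) ?_
    (w := (.inl 0 : Gmin2Vertex (m + 1))) ?_ ?_
  · intro v
    simp only [cycleEdge, Fin.castSucc_zero, zero_add, Fin.coeSucc_eq_succ, Fin.succ_last,
      Sym2.mem_iff, Fin.ext_iff, Fin.val_zero, Fin.val_one, Fin.val_castSucc, Fin.val_last]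
    omega
  all_goals
    rw [gmin2Edge, Fin.lastCases_castSucc]
    simp [cycleEdge]
end
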